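/- In a tree-like structure of height ℓ with its canonical half-edge labeling (L/R within layers, P toward parent, ChL/ChR toward children), any closed walk (cycle) whose steps are each labeled from {L, R, P, ChR} and whose label sequence matches the pattern (P* | ChR*)(L* | R*) must be trivial (have length 0). Consequently, if every node outputs a pointer label consistent with the pointer-chaining constraints and no node outputs Error, a contradiction arises: no such total pointer assignment exists on a valid tree-like structure. -/
import Mathlib


/-- The pointer labels. -/
inductive Ptr | L | R | P | ChR
deriving DecidableEq

/-- The canonical step function in a tree-like structure of height `ℓ`:
from node `(l,k)`, `R` goes to `(l,k+1)`, `L` to `(l,k-1)`, `P` to the parent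
`(l-1, ⌊k/2⌋)`, and `ChR` to the right child `(l+1, 2k+1)` (when these exist). -/
def tstep (ℓ : ℕ) (u : ℕ × ℕ) : Ptr → Option (ℕ × ℕ)
  | Ptr.R => if u.2 + 1 < 2 ^ u.1 then some (u.1, u.2 + 1) else none
  | Ptr.L => if 0 < u.2 then some (u.1, u.2 - 1) else none
  | Ptr.P => if 0 < u.1 then some (u.1 - 1, u.2 / 2) else none
  | Ptr.ChR => if u.1 + 1 < ℓ then some (u.1 + 1, 2 * u.2 + 1) else none

private lemma auxDec (f : ℕ → ℕ) : ∀ j, (∀ i < j, f (i+1) < f i) → 0 < j → f j < f 0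
  | 0, _, hj => absurd hj (lt_irrefl 0)
  | j+1, h, _ => by
    rcases Nat.eq_zero_or_pos j with rfl | hj
    · exact h 0 (by omega)
    · exact lt_trans (h j (by omega)) (auxDec f j (fun i hi => h i (by omega)) hj)

private lemma auxInc (f : ℕ → ℕ) : ∀ j, (∀ i < j, f i < f (i+1)) → 0 < j → f 0 < f j
  | 0, _, hj => absurd hj (lt_irrefl 0)
  | j+1, h, _ => by
    rcases Nat.eq_zero_or_pos j with rfl | hj
    · exact h 0 (by omega)
    · exact lt_trans (auxInc f j (fun i hi => h i (by omega)) hj) (h j (by omega))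

private lemma auxConst (f : ℕ → ℕ) (j : ℕ) :
    ∀ n, j ≤ n → (∀ i, j ≤ i → i < n → f (i+1) = f i) → f n = f j
  | 0, hj, _ => by
    have : j = 0 := by omega
    rw [this]
  | n+1, hj, h => by
    by_cases h' : j ≤ n
    · rw [h n h' (by omega), auxConst f j n h' (fun i hi hi' => h i hi (by omega))]
    · have : j = n + 1 := by omega
      rw [this]

/-- In a tree-like structure of height `ℓ`, any closed walk whose
steps are labeled from `{L,R,P,ChR}` (following the canonical labeling) and whose
label sequence matches the pattern `(P* | ChR*)(L* | R*)` must be trivial, i.e.,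
have length `0`. -/
theorem stmt13 (ℓ m : ℕ) (v : ℕ → ℕ × ℕ) (p : ℕ → Ptr)
    (hstart : (v 0).1 < ℓ ∧ (v 0).2 < 2 ^ (v 0).1)
    (hwalk : ∀ i < m, tstep ℓ (v i) (p i) = some (v (i + 1)))
    (hclosed : v m = v 0)
    (hpattern : ∃ j ≤ m,
      ((∀ i < j, p i = Ptr.P) ∨ (∀ i < j, p i = Ptr.ChR)) ∧
      ((∀ i, j ≤ i → i < m → p i = Ptr.L) ∨ (∀ i, j ≤ i → i < m → p i = Ptr.R))) :
    m = 0 := by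
  obtain ⟨j, hjm, h1, h2⟩ := hpattern
  by_contra hm0
  have hm : 0 < m := Nat.pos_of_ne_zero hm0
  -- level is constant on [j, m]
  have hconst : ∀ i, j ≤ i → i < m → (v (i+1)).1 = (v i).1 := by
    intro i hji him
    have hw := hwalk i him
    rcases h2 with h2 | h2 <;> rw [h2 i hji him] at hw <;>
      simp only [tstep] at hw <;> split at hw <;>
      simp only [Option.some.injEq, reduceCtorEq] at hw <;>
      rw [← hw]
  -- hence (v m).1 = (v j).1
  have hlevj : (v m).1 = (v j).1 :=
    auxConst (fun i => (v i).1) j m hjm hconst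
  have hlev0 : (v j).1 = (v 0).1 := by rw [← hlevj, hclosed]
  -- j must be 0
  have hj0 : j = 0 := by
    by_contra hj0
    have hj : 0 < j := Nat.pos_of_ne_zero hj0
    rcases h1 with h1 | h1
    · have : (v j).1 < (v 0).1 := by
        apply auxDec (fun i => (v i).1) j _ hj
        intro i hij
        have hw := hwalk i (by omega)
        rw [h1 i hij] at hw
        simp only [tstep] at hw
        split at hw <;> simp only [Option.some.injEq, reduceCtorEq] at hw
        show (v (i+1)).1 < (v i).1
        rw [← hw]
        show (v i).1 - 1 < (v i).1
        omega
      omega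
    · have : (v 0).1 < (v j).1 := by
        apply auxInc (fun i => (v i).1) j _ hj
        intro i hij
        have hw := hwalk i (by omega)
        rw [h1 i hij] at hw
        simp only [tstep] at hw
        split at hw <;> simp only [Option.some.injEq, reduceCtorEq] at hw
        show (v i).1 < (v (i+1)).1
        rw [← hw]
        show (v i).1 < (v i).1 + 1
        omega
      omega
  subst hj0
  -- now all steps in [0,m) are L or all R; second coordinate strictly monotone
  rcases h2 with h2 | h2
  · have : (v m).2 < (v 0).2 := by
      apply auxDec (fun i => (v i).2) m _ hm
      intro i him
      have hw := hwalk i him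
      rw [h2 i (Nat.zero_le i) him] at hw
      simp only [tstep] at hw
      split at hw <;> simp only [Option.some.injEq, reduceCtorEq] at hw
      show (v (i+1)).2 < (v i).2
      rw [← hw]
      show (v i).2 - 1 < (v i).2
      omega
    rw [hclosed] at this; omega
  · have : (v 0).2 < (v m).2 := by
      apply auxInc (fun i => (v i).2) m _ hm
      intro i him
      have hw := hwalk i him
      rw [h2 i (Nat.zero_le i) him] at hw
      simp only [tstep] at hw
      split at hw <;> simp only [Option.some.injEq, reduceCtorEq] at hw
      show (v i).2 < (v (i+1)).2
      rw [← hw]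
      show (v i).2 < (v i).2 + 1
      omega
    rw [hclosed] at this; omega
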